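/- Let ν > −1 and let N be a nonnegative integer. Define T^ν_{N,n}(x) = x^{N + 1/2} · (N! n! / (N + n)!) · P_n^{(N,ν)}(1 − 2x²). Then for all nonnegative integers n, m: ∫₀¹ T^ν_{N,n}(x) T^ν_{N,m}(x) (1 − x²)^ν dx = δ_{n,m} · n! (N!)² Γ(n + ν + 1) / ( 2 (2n + N + ν + 1) (n + N)! Γ(n + N + ν + 1) ), where δ_{n,m} is the Kronecker delta. -/

import Mathlib

open Real MeasureTheory

/-- Pochhammer symbol `(a)_k = a (a+1) ⋯ (a+k-1)`. -/
noncomputable def poch (a : ℝ) (k : ℕ) : ℝ := ∏ i ∈ Finset.range k, (a + i)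

/-- Bessel function of the first kind of real order `μ`, via its defining series. -/
noncomputable def besselJ (μ x : ℝ) : ℝ :=
  ∑' k : ℕ, (-1) ^ k / (k.factorial * Real.Gamma (μ + k + 1)) * (x / 2) ^ (2 * (k : ℝ) + μ)

/-- Jacobi polynomial `P_n^{(α,β)}(x)` via its hypergeometric series. -/
noncomputable def jacobiP (α β : ℝ) (n : ℕ) (x : ℝ) : ℝ :=
  poch (α + 1) n / n.factorial *
    ∑ k ∈ Finset.range (n + 1),
      poch (-(n : ℝ)) k * poch ((n : ℝ) + α + β + 1) k / (poch (α + 1) k * k.factorial) *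
        ((1 - x) / 2) ^ k

/-- `T^ν_{N,n}(x) = x^{N+1/2} (N! n!/(N+n)!) P_n^{(N,ν)}(1-2x²)`. -/
noncomputable def Tfun (ν : ℝ) (N n : ℕ) (x : ℝ) : ℝ :=
  x ^ ((N : ℝ) + 1 / 2) * ((N.factorial * n.factorial : ℝ) / (N + n).factorial) *
    jacobiP N ν n (1 - 2 * x ^ 2)

/-!
Put `u = x²`. Since `P_n^{(N,ν)}(1) = (N+1)_n / n!`, we have `T^ν_{N,n}(x) = x^{N+1/2} p_n(x²)`
with `p_n(u) = P_n^{(N,ν)}(1-2u) / P_n^{(N,ν)}(1) = Σ_k a_{n,k} u^k`, and the integral becomes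
`½ ∫₀¹ u^N p_n(u) p_m(u) (1-u)^ν du`. Expanding `p_m` in powers of `u` and integrating term by
term with the Beta integral, the moment `∫₀¹ u^N p_m(u) (1-u)^{ν+i} du` is a terminating ₂F₁
at `1`, which Chu–Vandermonde sums to a multiple of `(i+1-m)_m`; this vanishes for `i < m`.
Expanding `p_n` in powers of `1-u` therefore kills every term when `n < m`, and when `n = m`
only the top coefficient `(-1)^n a_{n,n}` survives, which gives the norm.
-/

open Finset Polynomial

open scoped Nat

lemma poch_eq_eval_ascPochhammer (a : ℝ) (k : ℕ) : poch a k = (ascPochhammer ℝ k).eval a := by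
  induction k with
  | zero => simp [poch]
  | succ k ih => rw [ascPochhammer_succ_eval, ← ih, poch, prod_range_succ, poch]

lemma poch_add (a : ℝ) (j k : ℕ) : poch a (j + k) = poch a j * poch (a + j) k := by
  simp only [poch, prod_range_add, Nat.cast_add, add_assoc]

lemma poch_succ (a : ℝ) (k : ℕ) : poch a (k + 1) = poch a k * (a + k) := prod_range_succ _ _

lemma poch_succ' (a : ℝ) (k : ℕ) : poch a (k + 1) = a * poch (a + 1) k := by
  rw [add_comm k, poch_add]
  simp [poch]

lemma poch_pos {a : ℝ} (ha : 0 < a) (k : ℕ) : 0 < poch a k :=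
  prod_pos fun i _ => by positivity

lemma factorial_mul_poch (N k : ℕ) : (N ! : ℝ) * poch (N + 1) k = (N + k)! := by
  rw [← Nat.factorial_mul_ascFactorial, Nat.ascFactorial_eq_prod_range, poch]
  push_cast
  rfl

lemma poch_neg_nat (m l : ℕ) : poch (-(m : ℝ)) l = (-1) ^ l * (m.choose l * l !) := by
  rw [poch_eq_eval_ascPochhammer, ascPochhammer_eval_neg_eq_descPochhammer,
    descPochhammer_eval_eq_descFactorial, Nat.descFactorial_eq_factorial_mul_choose]
  push_cast
  ring

lemma neg_one_pow_mul_poch (b : ℝ) (l : ℕ) : (-1) ^ l * poch b l = poch (-b - l + 1) l := by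
  have h := ascPochhammer_eval_neg_eq_descPochhammer ℝ (-b) l
  rw [neg_neg, descPochhammer_eval_eq_ascPochhammer, ← poch_eq_eval_ascPochhammer,
    ← poch_eq_eval_ascPochhammer] at h
  rw [h, ← mul_assoc, ← pow_add, Even.neg_one_pow ⟨l, rfl⟩, one_mul]

lemma poch_eq_zero_of_lt {i m : ℕ} (h : i < m) : poch ((i : ℝ) + 1 - m) m = 0 := by
  refine prod_eq_zero (i := m - 1 - i) (mem_range.mpr (by omega)) ?_
  rw [Nat.cast_sub (by omega), Nat.cast_sub (by omega)]
  push_cast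
  ring

lemma Gamma_add_nat {t : ℝ} (ht : 0 < t) (j : ℕ) : Gamma (t + j) = Gamma t * poch t j := by
  induction j with
  | zero => simp [poch]
  | succ j ih =>
    rw [Nat.cast_succ, ← add_assoc, Gamma_add_one (by positivity), ih, poch_succ]
    ring

lemma poch_vandermonde (r s : ℝ) (k : ℕ) :
    poch (r + s - k + 1) k = ∑ ij ∈ antidiagonal k,
      k.choose ij.1 * (poch (r - ij.1 + 1) ij.1 * poch (s - ij.2 + 1) ij.2) := by
  have h := Ring.descPochhammer_smeval_add (r := r) (s := s) k (Commute.all r s)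
  simpa only [descPochhammer_smeval_eq_ascPochhammer, ascPochhammer_smeval_eq_eval,
    ← poch_eq_eval_ascPochhammer] using h

theorem chu_vandermonde (b c : ℝ) (m : ℕ) (hc : poch c m ≠ 0) :
    ∑ l ∈ range (m + 1), poch (-(m : ℝ)) l * poch b l / (poch c l * l !)
      = poch (c - b) m / poch c m := by
  -- times `(c)_m`, the sum is Vandermonde's convolution of falling factorials at `-b`, `c + m - 1`
  have term : ∀ l ∈ range (m + 1), poch (-(m : ℝ)) l * poch b l / (poch c l * l !) * poch c m
      = m.choose l * (poch (-b - l + 1) l * poch (c + m - 1 - ↑(m - l) + 1) (m - l)) := by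
    intro l hl
    have hlm : l ≤ m := Nat.lt_succ_iff.mp (mem_range.mp hl)
    have hsplit : poch c m = poch c l * poch (c + l) (m - l) := by
      rw [← poch_add, Nat.add_sub_cancel' hlm]
    have hcl : poch c l ≠ 0 := left_ne_zero_of_mul (hsplit ▸ hc)
    rw [hsplit, poch_neg_nat, ← neg_one_pow_mul_poch, Nat.cast_sub hlm,
      show c + m - 1 - (m - l) + 1 = c + l by ring]
    field_simp
  rw [eq_div_iff hc, sum_mul, sum_congr rfl term,
    ← Nat.sum_antidiagonal_eq_sum_range_succ (fun i j =>
      (m.choose i : ℝ) * (poch (-b - i + 1) i * poch (c + m - 1 - j + 1) j)),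
    ← poch_vandermonde]
  congr 1
  ring

lemma intervalIntegrable_mul_one_sub_rpow {f : ℝ → ℝ} (hf : ContinuousOn f (Set.uIcc 0 1))
    {s : ℝ} (hs : -1 < s) : IntervalIntegrable (fun u => f u * (1 - u) ^ s) volume 0 1 := by
  have h : IntervalIntegrable (fun u : ℝ => (1 - u) ^ s) volume 0 1 := by
    simpa using
      ((intervalIntegral.intervalIntegrable_rpow' (a := 0) (b := 1) hs).comp_sub_left 1).symm
  exact h.continuousOn_mul hf

lemma integral_pow_mul_one_sub_rpow (K : ℕ) {s : ℝ} (hs : -1 < s) :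
    ∫ u in (0 : ℝ)..1, u ^ K * (1 - u) ^ s = K ! / poch (s + 1) (K + 1) := by
  have hB := Complex.betaIntegral_eval_nat_add_one_right (u := (s : ℂ) + 1)
    (by simp; linarith) K
  rw [← Complex.betaIntegral_symm, Complex.betaIntegral] at hB
  apply Complex.ofReal_injective
  rw [← intervalIntegral.integral_ofReal]
  push_cast [poch]
  rw [← hB]
  refine intervalIntegral.integral_congr fun u hu => ?_
  rw [Set.uIcc_of_le zero_le_one] at hu
  have h1u : 0 ≤ 1 - u := by linarith [hu.2]
  simp only [add_sub_cancel_right, Complex.cpow_natCast]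
  rw [← Complex.ofReal_one, ← Complex.ofReal_sub, Complex.ofReal_cpow h1u]

lemma integral_comp_sq_mul_self (g : ℝ → ℝ) :
    ∫ x in (0 : ℝ)..1, g (x ^ 2) * x = (∫ u in (0 : ℝ)..1, g u) / 2 := by
  have h := intervalIntegral.integral_comp_mul_deriv_of_deriv_nonneg (g := g)
    (f := fun x : ℝ => x ^ 2) (f' := fun x => 2 * x) (a := 0) (b := 1) (by fun_prop)
    (fun x _ => by simpa using hasDerivAt_pow 2 x)
    (fun x hx => by simp at hx; linarith [hx.1])
  simp only [Function.comp_def, ne_eq, OfNat.ofNat_ne_zero, not_false_eq_true, zero_pow,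
    one_pow] at h
  rw [← h, ← intervalIntegral.integral_div]
  congr 1 with x
  ring

section OneSubExpansion

variable {R : Type*} [CommRing R]

def coeffOneSub (a : ℕ → R) (n i : ℕ) : R :=
  (-1) ^ i * ∑ k ∈ range (n + 1), a k * k.choose i

lemma sum_mul_pow_eq_sum_coeffOneSub (a : ℕ → R) (n : ℕ) (u : R) :
    ∑ k ∈ range (n + 1), a k * u ^ k
      = ∑ i ∈ range (n + 1), coeffOneSub a n i * (1 - u) ^ i := by
  have binom : ∀ k ∈ range (n + 1),
      u ^ k = ∑ i ∈ range (n + 1), (-1) ^ i * (1 - u) ^ i * k.choose i := by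
    intro k hk
    have hkn : k + 1 ≤ n + 1 := mem_range.mp hk
    rw [← sum_range_add_sum_Ico _ hkn, sum_eq_zero (s := Ico _ _)
      fun i hi => by rw [Nat.choose_eq_zero_of_lt (mem_Ico.mp hi).1]; simp]
    have h := add_pow (-(1 - u)) 1 k
    simp only [neg_sub, sub_add_cancel, one_pow, mul_one] at h
    rw [h, add_zero]
    refine sum_congr rfl fun i _ => ?_
    rw [← neg_sub, neg_pow]
  rw [sum_congr rfl fun k hk => congrArg (a k * ·) (binom k hk)]
  simp only [mul_sum, coeffOneSub, sum_mul]
  rw [sum_comm]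
  refine sum_congr rfl fun i _ => sum_congr rfl fun k _ => ?_
  ring

lemma coeffOneSub_self (a : ℕ → R) (n : ℕ) : coeffOneSub a n n = (-1) ^ n * a n := by
  rw [coeffOneSub, sum_eq_single_of_mem n (self_mem_range_succ n) fun k hk hkn => by
    rw [Nat.choose_eq_zero_of_lt (by have := mem_range.mp hk; omega)]; simp]
  simp

end OneSubExpansion

noncomputable def jacobiCoeff (α β : ℝ) (n k : ℕ) : ℝ :=
  poch (-(n : ℝ)) k * poch ((n : ℝ) + α + β + 1) k / (poch (α + 1) k * k !)

/-- `P_n^{(α,β)}(1 - 2u)` divided by `P_n^{(α,β)}(1) = (α+1)_n / n!`. -/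
noncomputable def shiftedJacobi (α β : ℝ) (n : ℕ) (u : ℝ) : ℝ :=
  ∑ k ∈ range (n + 1), jacobiCoeff α β n k * u ^ k

lemma jacobiP_one_sub_two_mul (α β : ℝ) (n : ℕ) (u : ℝ) :
    jacobiP α β n (1 - 2 * u) = poch (α + 1) n / n ! * shiftedJacobi α β n u := by
  rw [jacobiP, shiftedJacobi]
  congr 1
  refine sum_congr rfl fun k _ => ?_
  rw [jacobiCoeff, sub_sub_cancel, mul_div_cancel_left₀ u two_ne_zero]

lemma coeffOneSub_jacobiCoeff_self (α β : ℝ) (n : ℕ) :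
    coeffOneSub (jacobiCoeff α β n) n n = poch ((n : ℝ) + α + β + 1) n / poch (α + 1) n := by
  have hn : (n ! : ℝ) ≠ 0 := by positivity
  rw [coeffOneSub_self, jacobiCoeff, poch_neg_nat, Nat.choose_self, Nat.cast_one, one_mul]
  field_simp
  rw [← pow_mul, Even.neg_one_pow ⟨n, by ring⟩, one_mul]

lemma Tfun_eq_rpow_mul_shiftedJacobi (ν : ℝ) (N n : ℕ) (x : ℝ) :
    Tfun ν N n x = x ^ ((N : ℝ) + 1 / 2) * shiftedJacobi N ν n (x ^ 2) := by
  have h := factorial_mul_poch N n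
  rw [Tfun, jacobiP_one_sub_two_mul]
  field_simp
  rw [mul_assoc (x ^ _) _ (poch _ _), h]

lemma integral_pow_mul_shiftedJacobi_mul_one_sub_rpow (ν : ℝ) (N m : ℕ) {s : ℝ}
    (hs : -1 < s) :
    ∫ u in (0 : ℝ)..1, u ^ N * shiftedJacobi N ν m u * (1 - u) ^ s
      = N ! * poch (s - ν + 1 - m) m / (poch (s + 1) (N + 1) * poch (s + N + 2) m) := by
  have hs1 : 0 < s + 1 := by linarith
  have hsN : 0 < s + N + 2 := by linarith [(N.cast_nonneg : (0 : ℝ) ≤ N)]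
  have term : ∀ l ∈ range (m + 1),
      jacobiCoeff N ν m l * ((N + l)! / poch (s + 1) (N + l + 1))
        = N ! / poch (s + 1) (N + 1) *
          (poch (-(m : ℝ)) l * poch (m + N + ν + 1) l / (poch (s + N + 2) l * l !)) := by
    intro l _
    have hsplit : poch (s + 1) (N + l + 1) = poch (s + 1) (N + 1) * poch (s + N + 2) l := by
      rw [show N + l + 1 = N + 1 + l by ring, poch_add]
      push_cast
      ring_nf
    have hN := (poch_pos (a := (N : ℝ) + 1) (by positivity) l).ne'
    have h1 := (poch_pos hs1 (N + 1)).ne'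
    have h2 := (poch_pos hsN l).ne'
    rw [jacobiCoeff, hsplit, ← factorial_mul_poch]
    field_simp
  calc ∫ u in (0 : ℝ)..1, u ^ N * shiftedJacobi N ν m u * (1 - u) ^ s
      = ∫ u in (0 : ℝ)..1, ∑ l ∈ range (m + 1),
          jacobiCoeff N ν m l * (u ^ (N + l) * (1 - u) ^ s) := by
        refine intervalIntegral.integral_congr fun u _ => ?_
        simp only [shiftedJacobi, mul_sum, sum_mul, pow_add]
        refine sum_congr rfl fun l _ => ?_
        ring
    _ = ∑ l ∈ range (m + 1), jacobiCoeff N ν m l * ((N + l)! / poch (s + 1) (N + l + 1)) := by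
        rw [intervalIntegral.integral_finsetSum fun l _ =>
          (intervalIntegrable_mul_one_sub_rpow (by fun_prop) hs).const_mul _]
        simp only [intervalIntegral.integral_const_mul, integral_pow_mul_one_sub_rpow _ hs]
    _ = N ! * poch (s - ν + 1 - m) m / (poch (s + 1) (N + 1) * poch (s + N + 2) m) := by
        rw [sum_congr rfl term, ← mul_sum, chu_vandermonde _ _ _ (poch_pos hsN m).ne']
        rw [show s + N + 2 - (m + N + ν + 1) = s - ν + 1 - m by ring]
        ring

lemma integral_Tfun_mul_Tfun_eq_sum {ν : ℝ} (hν : -1 < ν) (N n m : ℕ) :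
    ∫ x in (0 : ℝ)..1, Tfun ν N n x * Tfun ν N m x * (1 - x ^ 2) ^ ν
      = ∑ i ∈ range (n + 1), coeffOneSub (jacobiCoeff N ν n) n i *
          (N ! * poch ((i : ℝ) + 1 - m) m / (poch (ν + i + 1) (N + 1) * poch (ν + i + N + 2) m))
          / 2 := by
  set g : ℝ → ℝ := fun u => u ^ N * shiftedJacobi N ν n u * shiftedJacobi N ν m u * (1 - u) ^ ν
  have hsubst : Set.EqOn (fun x => Tfun ν N n x * Tfun ν N m x * (1 - x ^ 2) ^ ν)
      (fun x => g (x ^ 2) * x) (Set.uIcc 0 1) := by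
    intro x hx
    have hx0 : 0 ≤ x := by rw [Set.uIcc_of_le zero_le_one] at hx; exact hx.1
    have hxx : x ^ ((N : ℝ) + 1 / 2) * x ^ ((N : ℝ) + 1 / 2) = (x ^ 2) ^ N * x := by
      rw [← rpow_add' hx0 (by positivity), ← pow_mul, ← pow_succ, ← rpow_natCast]
      push_cast
      ring_nf
    simp only [g, Tfun_eq_rpow_mul_shiftedJacobi]
    linear_combination (shiftedJacobi N ν n (x ^ 2) * shiftedJacobi N ν m (x ^ 2) *
      (1 - x ^ 2) ^ ν) * hxx
  have hexpand : Set.EqOn g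
      (fun u => ∑ i ∈ range (n + 1), coeffOneSub (jacobiCoeff N ν n) n i *
        (u ^ N * shiftedJacobi N ν m u * (1 - u) ^ (ν + i))) (Set.Ioo 0 1) := by
    intro u hu
    have h1u : 1 - u ≠ 0 := by linarith [hu.2]
    have hp : shiftedJacobi N ν n u
        = ∑ i ∈ range (n + 1), coeffOneSub (jacobiCoeff N ν n) n i * (1 - u) ^ i :=
      sum_mul_pow_eq_sum_coeffOneSub _ _ _
    simp only [g, hp, mul_sum, sum_mul, rpow_add_natCast h1u]
    refine sum_congr rfl fun i _ => ?_
    ring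
  have hint : ∀ i ∈ range (n + 1),
      IntervalIntegrable (fun u => coeffOneSub (jacobiCoeff N ν n) n i *
        (u ^ N * shiftedJacobi N ν m u * (1 - u) ^ (ν + i))) volume 0 1 := fun i _ =>
    (intervalIntegrable_mul_one_sub_rpow (by unfold shiftedJacobi; fun_prop)
      (by linarith [(i.cast_nonneg : (0 : ℝ) ≤ i)])).const_mul _
  rw [intervalIntegral.integral_congr hsubst, integral_comp_sq_mul_self,
    intervalIntegral.integral_congr_Ioo_of_le zero_le_one hexpand,
    intervalIntegral.integral_finsetSum hint, sum_div]
  refine sum_congr rfl fun i _ => ?_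
  rw [intervalIntegral.integral_const_mul, integral_pow_mul_shiftedJacobi_mul_one_sub_rpow _ _ _
    (by linarith [(i.cast_nonneg : (0 : ℝ) ≤ i)]),
    show ν + i - ν + 1 - m = (i : ℝ) + 1 - m by ring]

lemma integral_Tfun_mul_Tfun_of_lt {ν : ℝ} (hν : -1 < ν) (N : ℕ) {n m : ℕ} (h : n < m) :
    ∫ x in (0 : ℝ)..1, Tfun ν N n x * Tfun ν N m x * (1 - x ^ 2) ^ ν = 0 := by
  rw [integral_Tfun_mul_Tfun_eq_sum hν]
  refine sum_eq_zero fun i hi => ?_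
  rw [poch_eq_zero_of_lt (by have := mem_range.mp hi; omega)]
  simp

lemma integral_Tfun_mul_self {ν : ℝ} (hν : -1 < ν) (N n : ℕ) :
    ∫ x in (0 : ℝ)..1, Tfun ν N n x * Tfun ν N n x * (1 - x ^ 2) ^ ν
      = n ! * (N ! : ℝ) ^ 2 * Gamma (n + ν + 1) /
          (2 * (2 * n + N + ν + 1) * (n + N)! * Gamma (n + N + ν + 1)) := by
  have ht : 0 < (n : ℝ) + ν + 1 := by linarith [(n.cast_nonneg : (0 : ℝ) ≤ n)]
  have hGamma : Gamma (n + N + ν + 1) = Gamma (n + ν + 1) * poch (ν + n + 1) N := by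
    rw [add_comm ν, ← Gamma_add_nat ht]
    ring_nf
  have htop : poch ((n : ℝ) + N + ν + 1) n * (2 * n + N + ν + 1)
      = (n + N + ν + 1) * poch (ν + n + N + 2) n := by
    have h := (poch_succ _ n).symm.trans (poch_succ' ((n : ℝ) + N + ν + 1) n)
    rwa [show (n : ℝ) + N + ν + 1 + n = 2 * n + N + ν + 1 by ring,
      show (n : ℝ) + N + ν + 1 + 1 = ν + n + N + 2 by ring] at h
  have hfac := factorial_mul_poch N n
  have hone : poch ((n : ℝ) + 1 - n) n = n ! := by
    simpa using factorial_mul_poch 0 n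
  rw [integral_Tfun_mul_Tfun_eq_sum hν, sum_eq_single_of_mem n (self_mem_range_succ n)
    fun i hi hin => by rw [poch_eq_zero_of_lt (by have := mem_range.mp hi; omega)]; simp,
    coeffOneSub_jacobiCoeff_self, hone, poch_succ, hGamma, add_comm n N]
  have hN : (0 : ℝ) ≤ N := N.cast_nonneg
  have hb : 0 < ν + n + 1 := by linarith
  have := (poch_pos hb N).ne'
  have := (poch_pos (a := (N : ℝ) + 1) (by positivity) n).ne'
  have := (poch_pos (a := ν + n + N + 2) (by linarith) n).ne'
  have := (Gamma_pos_of_pos ht).ne'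
  have : ν + n + 1 + N ≠ 0 := by linarith
  rw [← hfac]
  field_simp
  rw [eq_div_iff (by linarith)]
  linear_combination htop

theorem Tfun_orthogonality (ν : ℝ) (hν : ν > -1) (N n m : ℕ) :
    ∫ x in (0:ℝ)..1, Tfun ν N n x * Tfun ν N m x * (1 - x ^ 2) ^ ν
      = (if n = m then (1:ℝ) else 0) *
          ((n.factorial : ℝ) * (N.factorial : ℝ) ^ 2 * Real.Gamma (n + ν + 1) /
            (2 * (2 * n + N + ν + 1) * (n + N).factorial * Real.Gamma (n + N + ν + 1))) := by
  rcases lt_trichotomy n m with h | rfl | h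
  · rw [integral_Tfun_mul_Tfun_of_lt hν N h, if_neg h.ne, zero_mul]
  · rw [integral_Tfun_mul_self hν, if_pos rfl, one_mul]
  · rw [if_neg h.ne', zero_mul]
    simpa only [mul_comm (Tfun ν N m _)] using integral_Tfun_mul_Tfun_of_lt hν N h
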